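/- Let φ: W_{G_2} → S_7 be the homomorphism determined by s_α ↦ (1 2)(3 5)(6 7) and s_β ↦ (2 3)(5 6), where s_α, s_β are the simple reflections of G_2. Then φ is a well-defined injective group homomorphism, and it is compatible with the map f: ℤ^7 → ℤ^3 of the previous statement: for every root s of G_2 and every w ∈ W_{G_2}, the set of A_6-roots mapping to w·s under f equals φ(w) applied to the set of A_6-roots mapping to s. -/

import Mathlib

/-!
`W_{G_2}` and the subgroup of `S_7` generated by `(1 2)(3 5)(6 7)` and `(2 3)(5 6)` are both
faithful images of `S_3 × {±1}`. On `ℚ^ℕ`, `(σ, ε)` permutes the coordinates `1, 2, 3` by `σ`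
and multiplies by `ε`; then `s_α = ((1 2), 1)` and `s_β = ((1 3), -1)`. On the six roots
`e_i - e_j` of `A_2`, which `f` puts in bijection with the indices `1, 2, 3, 5, 6, 7`, it acts by
`e_i - e_j ↦ ε (e_{σ i} - e_{σ j})`, and the two generators act as `(1 2)(3 5)(6 7)` and
`(2 3)(5 6)`. Hence `φ` exists and is injective. The conditions `f ∘ φ(w) = w ∘ f` and
`φ(w) [1, 7] = [1, 7]` are closed under products and inverses of pairs `(w, φ(w))`, so they only
need to be checked on the generators; together they say that `φ(w)` maps the `A_6`-roots
over `s` bijectively onto those over `w s`.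
-/

/-- The `i`-th standard basis vector `e_i` (1-indexed coordinates in `ℕ → ℚ`). -/
def ebq (i : ℕ) : ℕ → ℚ := fun j => if j = i then 1 else 0

/-- Roots of `A_6` in coordinates `1,…,7`: the vectors `e_a - e_b`, `a ≠ b`. -/
def isA6root (r : ℕ → ℚ) : Prop :=
  ∃ a b : ℕ, 1 ≤ a ∧ a ≤ 7 ∧ 1 ≤ b ∧ b ≤ 7 ∧ a ≠ b ∧ r = ebq a - ebq b

/-- The map `f : ℚ^7 → ℚ^3` determined by `f(e_1) = e_1 - e_3`, `f(e_2) = e_2 - e_3`,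
`f(e_3) = e_1 - e_2`, `f(e_4) = 0`, `f(e_5) = -(e_1 - e_2)`, `f(e_6) = -(e_2 - e_3)`,
`f(e_7) = -(e_1 - e_3)`. -/
def fG (v : ℕ → ℚ) : ℕ → ℚ := fun j =>
  if j = 1 then v 1 + v 3 - v 5 - v 7
  else if j = 2 then v 2 - v 3 + v 5 - v 6
  else if j = 3 then -v 1 - v 2 + v 6 + v 7
  else 0

/-- The simple root `α = e_1 - e_2` of `G_2`. -/
def alphaG : ℕ → ℚ := ebq 1 - ebq 2

/-- The simple root `β = -e_1 + 2e_2 - e_3` of `G_2`. -/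
def betaG : ℕ → ℚ := fun j => if j = 1 then -1 else if j = 2 then 2 else if j = 3 then -1 else 0

/-- Roots of `G_2`: `±{α, β, β+α, β+2α, β+3α, 2β+3α}`. -/
def isG2root (s : ℕ → ℚ) : Prop :=
  s = alphaG ∨ s = betaG ∨ s = betaG + alphaG ∨ s = betaG + 2 • alphaG ∨
    s = betaG + 3 • alphaG ∨ s = 2 • betaG + 3 • alphaG ∨
  s = -alphaG ∨ s = -betaG ∨ s = -(betaG + alphaG) ∨ s = -(betaG + 2 • alphaG) ∨
    s = -(betaG + 3 • alphaG) ∨ s = -(2 • betaG + 3 • alphaG)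

/-- The simple reflection `s_α` in `α = e_1 - e_2`: it swaps the coordinates `1, 2`. -/
def sAlpha : (ℕ → ℚ) ≃ₗ[ℚ] (ℕ → ℚ) := LinearEquiv.funCongrLeft ℚ ℚ (Equiv.swap 1 2)

/-- The simple reflection `s_β` in `β = -e_1 + 2e_2 - e_3`: on the root lattice of
`G_2` (sum-zero vectors supported in coordinates `1, 2, 3`) it acts as the negative
of the coordinate swap `1 ↔ 3`. -/
def sBeta : (ℕ → ℚ) ≃ₗ[ℚ] (ℕ → ℚ) :=
  (LinearEquiv.funCongrLeft ℚ ℚ (Equiv.swap 1 3)).trans (LinearEquiv.neg ℚ)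

/-- The Weyl group `W_{G_2}`, generated by the simple reflections `s_α, s_β`. -/
def WG2 : Subgroup ((ℕ → ℚ) ≃ₗ[ℚ] (ℕ → ℚ)) := Subgroup.closure {sAlpha, sBeta}

/-- The permutation `(1 2)(3 5)(6 7)` of `S_7`. -/
def pAlpha : Equiv.Perm ℕ := Equiv.swap 1 2 * Equiv.swap 3 5 * Equiv.swap 6 7

/-- The permutation `(2 3)(5 6)` of `S_7`. -/
def pBeta : Equiv.Perm ℕ := Equiv.swap 2 3 * Equiv.swap 5 6

/-- The action of a permutation `p ∈ S_7` on `ℚ^7`: `p·e_a = e_{p(a)}`, i.e.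
`(p·v)(j) = v(p⁻¹ j)`. -/
def permAct (p : Equiv.Perm ℕ) (v : ℕ → ℚ) : ℕ → ℚ := fun j => v (p.symm j)

open Equiv Function
open scoped Pointwise

abbrev V := ℕ → ℚ

theorem Equiv.Perm.viaFintypeEmbedding_eq_of_apply {α β : Type*} [Fintype α] [DecidableEq β]
    {e : Perm α} {ι : α ↪ β} {q : Perm β} {S : Finset β} (hS : Finset.univ.map ι = S)
    (himage : ∀ a, q (ι a) = ι (e a)) (hfix : ∀ b ∉ S, q b = b) :
    e.viaFintypeEmbedding ι = q := by
  ext b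
  by_cases hb : b ∈ Set.range ι
  · obtain ⟨a, rfl⟩ := hb
    rw [viaFintypeEmbedding_apply_image, himage]
  · rw [viaFintypeEmbedding_apply_notMem_range _ _ hb, hfix b (by simpa [← hS] using hb)]

theorem MonoidHom.exists_injective_of_le_range {A G H : Type*} [Group A] [Group G] [Group H]
    {ι : A →* G} (hι : Injective ι) {κ : A →* H} (hκ : Injective κ) {K : Subgroup G}
    (hK : K ≤ ι.range) :
    ∃ φ : K →* H, Injective φ ∧ ∀ (a : A) (g : K), (g : G) = ι a → φ g = κ a := by
  refine ⟨κ.comp ((MonoidHom.ofInjective hι).symm.toMonoidHom.comp (Subgroup.inclusion hK)),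
    ?_, fun a g hg => ?_⟩
  · simp only [MonoidHom.coe_comp, MulEquiv.coe_toMonoidHom]
    exact hκ.comp ((MulEquiv.injective _).comp (Subgroup.inclusion_injective hK))
  have : Subgroup.inclusion hK g = MonoidHom.ofInjective hι a := Subtype.ext hg
  simp [this]

theorem Subgroup.graph_mem_of_closure {G H : Type*} [Group G] [Group H] {s : Set G}
    (φ : closure s →* H) {S : Subgroup (G × H)}
    (hs : ∀ g (hg : g ∈ s), (g, φ ⟨g, subset_closure hg⟩) ∈ S) (w : closure s) :
    ((w : G), φ w) ∈ S := by
  have : closure (((↑) : closure s → G) ⁻¹' s) ≤ S.comap ((closure s).subtype.prod φ) :=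
    (closure_le _).2 fun g hg => hs g hg
  rw [closure_closure_coe_preimage] at this
  exact this (mem_top w)

theorem Equiv.image_setOf_and_eq {α β : Type*} (e : α ≃ α) (P : α → Prop) (F : α → β)
    (g : β ≃ β) (hP : ∀ r, P (e r) ↔ P r) (hF : ∀ r, F (e r) = g (F r)) (s : β) :
    e '' {r | P r ∧ F r = s} = {r | P r ∧ F r = g s} := by
  ext r
  obtain ⟨r, rfl⟩ := e.surjective r
  simp [hP, hF]

theorem permAct_permAct_inv (p : Perm ℕ) (v : V) : permAct p (permAct p⁻¹ v) = v :=
  funext fun j => congrArg v (p.apply_symm_apply j)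

theorem permAct_inv_permAct (p : Perm ℕ) (v : V) : permAct p⁻¹ (permAct p v) = v :=
  funext fun j => congrArg v (p.symm_apply_apply j)

theorem permAct_sub_ebq (p : Perm ℕ) (a b : ℕ) :
    permAct p (ebq a - ebq b) = ebq (p a) - ebq (p b) := by
  funext j
  simp [permAct, ebq, Equiv.symm_apply_eq]

def permActHom : Perm ℕ →* V ≃ₗ[ℚ] V where
  toFun p := LinearEquiv.funCongrLeft ℚ ℚ p⁻¹
  map_one' := rfl
  map_mul' _ _ := rfl

def intertwiners (F : V → V) : Subgroup ((V ≃ₗ[ℚ] V) × Perm ℕ) where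
  carrier := {q | ∀ v, F (permAct q.2 v) = q.1 (F v)}
  mul_mem' {q r} hq hr v := by
    change F (permAct q.2 (permAct r.2 v)) = q.1 (r.1 (F v))
    rw [hq, hr]
  one_mem' _ := rfl
  inv_mem' {q} hq v := by
    change F (permAct q.2⁻¹ v) = q.1.symm (F v)
    rw [LinearEquiv.eq_symm_apply, ← hq, permAct_permAct_inv]

def coordEmb : Fin 3 ↪ ℕ := ⟨fun i => i + 1, fun _ _ h => Fin.ext (Nat.succ_injective h)⟩

def coordPerm : Perm (Fin 3) →* Perm ℕ := Perm.extendDomainHom coordEmb.toEquivRange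

theorem coordPerm_injective : Injective coordPerm := Perm.extendDomainHom_injective _

theorem coordPerm_apply_zero (σ : Perm (Fin 3)) : coordPerm σ 0 = 0 :=
  σ.viaFintypeEmbedding_apply_notMem_range coordEmb (by simp [coordEmb])

theorem coordPerm_swap_zero_one : coordPerm (swap 0 1) = swap 1 2 :=
  Perm.viaFintypeEmbedding_eq_of_apply (S := {1, 2, 3}) (by decide) (by decide) fun b hb => by
    simp_all [swap_apply_of_ne_of_ne]

theorem coordPerm_swap_zero_two : coordPerm (swap 0 2) = swap 1 3 :=
  Perm.viaFintypeEmbedding_eq_of_apply (S := {1, 2, 3}) (by decide) (by decide) fun b hb => by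
    simp_all [swap_apply_of_ne_of_ne]

abbrev SignedPerm := Perm (Fin 3) × ℤˣ

def signedPermHom : SignedPerm →* V ≃ₗ[ℚ] V :=
  (permActHom.comp coordPerm).noncommCoprod (DistribMulAction.toModuleAut ℚ V)
    fun _ ε => LinearEquiv.ext fun v => by
      change permActHom _ (ε • v) = ε • permActHom _ v
      rw [Units.smul_def, Units.smul_def, map_zsmul]

theorem signedPermHom_apply (σ : Perm (Fin 3)) (ε : ℤˣ) (v : V) (j : ℕ) :
    signedPermHom (σ, ε) v j = ε • v ((coordPerm σ)⁻¹ j) := rfl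

theorem signedPermHom_injective : Injective signedPermHom := by
  rw [injective_iff_map_eq_one]
  rintro ⟨σ, ε⟩ h
  -- evaluate at `j ↦ j + 1`; coordinate `0` is fixed by every `coordPerm σ` and detects `ε`
  have hv (j : ℕ) : (ε : ℚ) * ((coordPerm σ⁻¹ j : ℕ) + 1) = j + 1 := by
    have := congrFun (LinearEquiv.congr_fun h (fun j => (j : ℚ) + 1)) j
    rwa [signedPermHom_apply, ← map_inv, Units.smul_def, zsmul_eq_mul] at this
  have hε : ε = 1 := by
    have h0 := hv 0
    rw [coordPerm_apply_zero] at h0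
    rcases Int.units_eq_one_or ε with rfl | rfl
    · rfl
    · norm_num at h0
  have hσ : coordPerm σ⁻¹ = 1 := by
    ext j
    exact_mod_cast (by simpa [hε] using hv j : ((coordPerm σ⁻¹ j : ℕ) : ℚ) = j)
  rw [hε, coordPerm_injective (hσ.trans (map_one _).symm) |> inv_eq_one.1]
  rfl

theorem signedPermHom_alpha : signedPermHom (swap 0 1, 1) = sAlpha := by
  ext v j
  simp [signedPermHom_apply, coordPerm_swap_zero_one, sAlpha]

theorem signedPermHom_beta : signedPermHom (swap 0 2, -1) = sBeta := by
  ext v j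
  simp [signedPermHom_apply, coordPerm_swap_zero_two, sBeta]

theorem WG2_le_signedPermHom_range : WG2 ≤ signedPermHom.range :=
  (Subgroup.closure_le _).2 <| Set.insert_subset_iff.2
    ⟨⟨_, signedPermHom_alpha⟩, Set.singleton_subset_iff.2 ⟨_, signedPermHom_beta⟩⟩

/-- The pair `(i, j)` stands for the root `e_{i+1} - e_{j+1}` of `A_2`. -/
abbrev A2Root := {x : Fin 3 × Fin 3 // x.1 ≠ x.2}

namespace A2Root

def smul (a : SignedPerm) (x : A2Root) : A2Root :=
  if a.2 = 1 then ⟨(a.1 x.1.1, a.1 x.1.2), a.1.injective.ne x.2⟩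
  else ⟨(a.1 x.1.2, a.1 x.1.1), a.1.injective.ne x.2.symm⟩

instance : MulAction SignedPerm A2Root where
  smul := smul
  one_smul x := show smul 1 x = x from if_pos rfl
  mul_smul := by
    rintro ⟨σ, ε⟩ ⟨τ, δ⟩ x
    change smul _ x = smul _ (smul _ x)
    rcases Int.units_eq_one_or ε with rfl | rfl <;> rcases Int.units_eq_one_or δ with rfl | rfl <;>
      simp [smul]

/-- Entry `(i, j)` of the table is the index `k` with `f(e_k) = e_{i+1} - e_{j+1}`. -/
def index : A2Root ↪ ℕ :=
  ⟨fun x => ![![0, 3, 1], ![5, 0, 2], ![7, 6, 0]] x.1.1 x.1.2, by decide⟩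

theorem map_index : Finset.univ.map index = {1, 2, 3, 5, 6, 7} := by decide

end A2Root

def rootPerm : SignedPerm →* Perm ℕ :=
  (Perm.extendDomainHom A2Root.index.toEquivRange).comp (MulAction.toPermHom SignedPerm A2Root)

theorem rootPerm_injective : Injective rootPerm := by
  refine (Perm.extendDomainHom_injective _).comp ?_
  rw [injective_iff_map_eq_one]
  decide

theorem rootPerm_alpha : rootPerm (swap 0 1, 1) = pAlpha :=
  Perm.viaFintypeEmbedding_eq_of_apply A2Root.map_index (by decide) fun b hb => by
    simp_all [pAlpha, swap_apply_of_ne_of_ne]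

theorem rootPerm_beta : rootPerm (swap 0 2, -1) = pBeta :=
  Perm.viaFintypeEmbedding_eq_of_apply A2Root.map_index (by decide) fun b hb => by
    simp_all [pBeta, swap_apply_of_ne_of_ne]

theorem fG_apply_eq_zero (v : V) {j : ℕ} (hj : 3 < j ∨ j = 0) : fG v j = 0 := by
  unfold fG; split_ifs <;> first | rfl | omega

theorem sAlpha_pAlpha_mem_intertwiners : (sAlpha, pAlpha) ∈ intertwiners fG := by
  intro v
  funext j
  change fG (permAct pAlpha v) j = fG v (swap 1 2 j)
  obtain hj | rfl | rfl | rfl : (3 < j ∨ j = 0) ∨ j = 1 ∨ j = 2 ∨ j = 3 := by omega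
  · rw [swap_apply_of_ne_of_ne (by omega) (by omega), fG_apply_eq_zero _ hj,
      fG_apply_eq_zero _ hj]
  all_goals simp [fG, permAct, pAlpha, Perm.mul_def, swap_apply_of_ne_of_ne]; ring

theorem sBeta_pBeta_mem_intertwiners : (sBeta, pBeta) ∈ intertwiners fG := by
  intro v
  funext j
  change fG (permAct pBeta v) j = -fG v (swap 1 3 j)
  obtain hj | rfl | rfl | rfl : (3 < j ∨ j = 0) ∨ j = 1 ∨ j = 2 ∨ j = 3 := by omega
  · rw [swap_apply_of_ne_of_ne (by omega) (by omega), fG_apply_eq_zero _ hj,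
      fG_apply_eq_zero _ hj, neg_zero]
  all_goals simp [fG, permAct, pBeta, Perm.mul_def, swap_apply_of_ne_of_ne]; ring

theorem isA6root_permAct {p : Perm ℕ}
    (hp : p ∈ MulAction.stabilizer (Perm ℕ) (Finset.Icc 1 7)) {r : V} (hr : isA6root r) :
    isA6root (permAct p r) := by
  obtain ⟨a, b, ha1, ha7, hb1, hb7, hab, rfl⟩ := hr
  have hmem (c : ℕ) (hc : c ∈ Finset.Icc 1 7) : p c ∈ Finset.Icc 1 7 := by
    rw [← MulAction.mem_stabilizer_iff.1 hp]
    exact Finset.smul_mem_smul_finset hc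
  simp only [Finset.mem_Icc] at hmem
  exact ⟨p a, p b, (hmem a ⟨ha1, ha7⟩).1, (hmem a ⟨ha1, ha7⟩).2, (hmem b ⟨hb1, hb7⟩).1,
    (hmem b ⟨hb1, hb7⟩).2, p.injective.ne hab, permAct_sub_ebq p a b⟩

theorem isA6root_permAct_iff {p : Perm ℕ}
    (hp : p ∈ MulAction.stabilizer (Perm ℕ) (Finset.Icc 1 7)) {r : V} :
    isA6root (permAct p r) ↔ isA6root r := by
  refine ⟨fun h => ?_, isA6root_permAct hp⟩
  simpa only [permAct_inv_permAct] using isA6root_permAct (inv_mem hp) h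

def compatiblePairs : Subgroup ((V ≃ₗ[ℚ] V) × Perm ℕ) :=
  intertwiners fG ⊓ (MulAction.stabilizer (Perm ℕ) (Finset.Icc 1 7)).comap (MonoidHom.snd _ _)

/-- there is a well-defined injective group homomorphism
`φ : W_{G_2} → S_7` with `s_α ↦ (1 2)(3 5)(6 7)` and `s_β ↦ (2 3)(5 6)`, and `φ` is
compatible with `f`: for every root `s` of `G_2` and every `w ∈ W_{G_2}`, the set
of `A_6`-roots mapping to `w·s` under `f` equals `φ(w)` applied to the set of
`A_6`-roots mapping to `s`. -/
theorem stmt_18 :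
    ∃ φ : WG2 →* Equiv.Perm ℕ,
      φ ⟨sAlpha, Subgroup.subset_closure (by simp)⟩ = pAlpha ∧
      φ ⟨sBeta, Subgroup.subset_closure (by simp)⟩ = pBeta ∧
      Function.Injective φ ∧
      ∀ w : WG2, ∀ s : ℕ → ℚ, isG2root s →
        {r : ℕ → ℚ | isA6root r ∧ fG r = (w : (ℕ → ℚ) ≃ₗ[ℚ] (ℕ → ℚ)) s}
          = permAct (φ w) '' {r : ℕ → ℚ | isA6root r ∧ fG r = s} := by
  obtain ⟨φ, hφ_inj, hφ⟩ :=
    MonoidHom.exists_injective_of_le_range signedPermHom_injective rootPerm_injective WG2_le_signedPermHom_range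
  have hα : φ ⟨sAlpha, Subgroup.subset_closure (by simp)⟩ = pAlpha :=
    (hφ _ _ signedPermHom_alpha.symm).trans rootPerm_alpha
  have hβ : φ ⟨sBeta, Subgroup.subset_closure (by simp)⟩ = pBeta :=
    (hφ _ _ signedPermHom_beta.symm).trans rootPerm_beta
  refine ⟨φ, hα, hβ, hφ_inj, fun w s _ => ?_⟩
  obtain ⟨hF, hI⟩ : ((w : V ≃ₗ[ℚ] V), φ w) ∈ compatiblePairs := by
    refine Subgroup.graph_mem_of_closure φ ?_ w
    rintro g (rfl | rfl)
    · exact hα ▸ ⟨sAlpha_pAlpha_mem_intertwiners, MulAction.mem_stabilizer_iff.2 (by decide)⟩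
    · exact hβ ▸ ⟨sBeta_pBeta_mem_intertwiners, MulAction.mem_stabilizer_iff.2 (by decide)⟩
  exact (Equiv.image_setOf_and_eq (permActHom (φ w)).toEquiv isA6root fG (w : V ≃ₗ[ℚ] V).toEquiv
    (fun _ => isA6root_permAct_iff hI) hF s).symm
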